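/- arXiv:2502.05355 — 2 statements merged into one kernel-verified Lean document; each statement's English description precedes it below -/
import Mathlib

section
/- Assume full NGMRES and GMRES are applied to Ax = b with the same initial guess x_0 ≠ x*, and for some k_0 > 0 the GMRES residuals satisfy r_{k_0−1}^G ≠ 0 and ‖r_{k−1}^G‖₂ > ‖r_k^G‖₂ for each k with 0 < k < k_0. If additionally r_{k_0}^G = r_{k_0−1}^G ≠ 0, then the full NGMRES residuals also stagnate: r_{k_0}^{NG} = r_{k_0−1}^{NG}. -/
open Matrix Filter

noncomputable section

/-- The residual `r(x) = A x - b` of the linear system `A x = b`. -/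
def residv {n : ℕ} (A : Matrix (Fin n) (Fin n) ℝ) (b x : Fin n → ℝ) : Fin n → ℝ :=
  A.mulVec x - b

/-- The Euclidean 2-norm on `Fin n → ℝ`. -/
def norm2 {n : ℕ} (x : Fin n → ℝ) : ℝ := Real.sqrt (x ⬝ᵥ x)

/-- The fixed-point map `q(x) = M x + b` with `M = I - A`. -/
def qmap {n : ℕ} (A : Matrix (Fin n) (Fin n) ℝ) (b x : Fin n → ℝ) : Fin n → ℝ :=
  (1 - A).mulVec x + b

/-- One NGMRES update from step `k`, with window `mk` and coefficients `β`:
`x_{k+1} = q(x_k) + ∑_{i=0}^{mk} β_i (q(x_k) - x_{k-i})`. -/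
def ngmresUpdate {n : ℕ} (A : Matrix (Fin n) (Fin n) ℝ) (b : Fin n → ℝ)
    (x : ℕ → Fin n → ℝ) (β : ℕ → ℝ) (k mk : ℕ) : Fin n → ℝ :=
  qmap A b (x k) + ∑ i ∈ Finset.range (mk + 1), β i • (qmap A b (x k) - x (k - i))

/-- The NGMRES iteration with window function `mk` (e.g. `mk k = min k m` for NGMRES(m),
`mk k = k` for full NGMRES): each step uses coefficients minimizing the 2-norm of the
next residual. -/
def IsNGMRES {n : ℕ} (A : Matrix (Fin n) (Fin n) ℝ) (b x0 : Fin n → ℝ) (mk : ℕ → ℕ)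
    (x : ℕ → Fin n → ℝ) (β : ℕ → ℕ → ℝ) : Prop :=
  x 0 = x0 ∧ ∀ k, x (k + 1) = ngmresUpdate A b x (β k) k (mk k) ∧
    ∀ β' : ℕ → ℝ, norm2 (residv A b (x (k + 1))) ≤
      norm2 (residv A b (ngmresUpdate A b x β' k (mk k)))

/-- The Krylov subspace `span {r0, A r0, …, A^{k-1} r0}`. -/
def krylov {n : ℕ} (A : Matrix (Fin n) (Fin n) ℝ) (r0 : Fin n → ℝ) (k : ℕ) :
    Submodule ℝ (Fin n → ℝ) :=
  Submodule.span ℝ {v | ∃ i < k, v = (A ^ i).mulVec r0}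

/-- GMRES: `x_k` minimizes the residual 2-norm over the affine space `x0 + K_k`. -/
def IsGMRES {n : ℕ} (A : Matrix (Fin n) (Fin n) ℝ) (b x0 : Fin n → ℝ)
    (x : ℕ → Fin n → ℝ) : Prop :=
  x 0 = x0 ∧ ∀ k, x k - x0 ∈ krylov A (residv A b x0) k ∧
    ∀ y : Fin n → ℝ, y - x0 ∈ krylov A (residv A b x0) k →
      norm2 (residv A b (x k)) ≤ norm2 (residv A b y)

/-- One Anderson acceleration update from step `k`, with window `mk`:
`x_{k+1} = q(x_k) + ∑_{i=1}^{mk} γ_i (q(x_k) - q(x_{k-i}))`. -/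
def aaUpdate {n : ℕ} (A : Matrix (Fin n) (Fin n) ℝ) (b : Fin n → ℝ)
    (x : ℕ → Fin n → ℝ) (γ : ℕ → ℝ) (k mk : ℕ) : Fin n → ℝ :=
  qmap A b (x k) + ∑ i ∈ Finset.Icc 1 mk, γ i • (qmap A b (x k) - qmap A b (x (k - i)))

/-- The Anderson acceleration least-squares objective
`r(x_k) + ∑_{i=1}^{mk} γ_i (r(x_k) - r(x_{k-i}))`. -/
def aaObj {n : ℕ} (A : Matrix (Fin n) (Fin n) ℝ) (b : Fin n → ℝ)
    (x : ℕ → Fin n → ℝ) (γ : ℕ → ℝ) (k mk : ℕ) : Fin n → ℝ :=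
  residv A b (x k) + ∑ i ∈ Finset.Icc 1 mk, γ i • (residv A b (x k) - residv A b (x (k - i)))

/-- Anderson acceleration with window function `mk`. -/
def IsAA {n : ℕ} (A : Matrix (Fin n) (Fin n) ℝ) (b x0 : Fin n → ℝ) (mk : ℕ → ℕ)
    (x : ℕ → Fin n → ℝ) (γ : ℕ → ℕ → ℝ) : Prop :=
  x 0 = x0 ∧ ∀ k, x (k + 1) = aaUpdate A b x (γ k) k (mk k) ∧
    ∀ γ' : ℕ → ℝ, norm2 (aaObj A b x (γ k) k (mk k)) ≤ norm2 (aaObj A b x γ' k (mk k))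

/-- The spectral norm `‖A‖₂` (the ℓ²→ℓ² operator norm). -/
def specNorm {n : ℕ} (A : Matrix (Fin n) (Fin n) ℝ) : ℝ :=
  ‖LinearMap.toContinuousLinearMap (Matrix.toEuclideanLin A)‖

/-- The spectral radius of a real matrix (computed over `ℂ`). -/
def specRad {n : ℕ} (M : Matrix (Fin n) (Fin n) ℝ) : ℝ :=
  (spectralRadius ℂ (M.map Complex.ofReal)).toReal


/-!
While GMRES strictly improves, full NGMRES reproduces it. Inductively, the differences
`x_i - x_0` (`i ≤ j`) span the Krylov space `K_j`, and the NGMRES search space at step `j`,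
their span together with `r_j`, is `K_{j+1}`. Strict decrease of the GMRES residuals forces
`x_{j+1} - x_0 ∉ K_j`, so `x_{j+1} - x_0` may replace `A^j r_0` as the new generator of `K_{j+1}`;
then `r_{j+1} = r_0 + A (x_{j+1} - x_0)` supplies the new direction `A^{j+1} r_0` of `K_{j+2}`.
Thus every NGMRES iterate up to `k_0` has minimal residual on `x_0 + K_j`, and as the minimal
residual on an affine subspace is unique, `r^NG_{k_0} = r^G_{k_0} = r^G_{k_0-1} = r^NG_{k_0-1}`.
-/

open Submodule

theorem sup_span_singleton_exchange {K V : Type*} [DivisionRing K] [AddCommGroup V]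
    [Module K V] {U : Submodule K V} {a w : V} (hw : w ∈ U ⊔ K ∙ a) (hwU : w ∉ U) :
    U ⊔ K ∙ w = U ⊔ K ∙ a := by
  have span_insert_eq : ∀ y : V, span K (insert y (U : Set V)) = U ⊔ K ∙ y := fun y => by
    rw [span_insert, span_eq, sup_comm]
  have ha : a ∈ U ⊔ K ∙ w := by
    rw [← span_insert_eq] at hw ⊢
    exact mem_span_insert_exchange hw (by rwa [span_eq])
  exact le_antisymm (sup_le le_sup_left ((span_singleton_le_iff_mem _ _).2 hw))
    (sup_le le_sup_left ((span_singleton_le_iff_mem _ _).2 ha))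

section Krylov

variable {n : ℕ} (A : Matrix (Fin n) (Fin n) ℝ) (r0 : Fin n → ℝ)

lemma mem_krylov_pow {i k : ℕ} (h : i < k) : (A ^ i) *ᵥ r0 ∈ krylov A r0 k :=
  subset_span ⟨i, h, rfl⟩

lemma krylov_mono {j k : ℕ} (h : j ≤ k) : krylov A r0 j ≤ krylov A r0 k :=
  span_mono fun _ ⟨i, hi, hv⟩ => ⟨i, hi.trans_le h, hv⟩

lemma krylov_zero : krylov A r0 0 = ⊥ := by
  simp [krylov]

lemma self_mem_krylov {k : ℕ} (h : 0 < k) : r0 ∈ krylov A r0 k := by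
  simpa using mem_krylov_pow A r0 h

lemma krylov_succ (k : ℕ) : krylov A r0 (k + 1) = krylov A r0 k ⊔ ℝ ∙ (A ^ k) *ᵥ r0 := by
  rw [krylov, krylov, ← span_union]
  congr 1
  ext v
  simp only [Set.mem_ofPred_eq, Set.mem_union, Set.mem_singleton_iff, Nat.lt_succ_iff_lt_or_eq]
  grind

lemma krylov_one : krylov A r0 1 = ℝ ∙ r0 := by
  simp [krylov_succ, krylov_zero]

lemma mulVec_mem_krylov {k : ℕ} {v : Fin n → ℝ} (h : v ∈ krylov A r0 k) :
    A *ᵥ v ∈ krylov A r0 (k + 1) := by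
  induction h using span_induction with
  | mem w hw =>
    obtain ⟨i, hi, rfl⟩ := hw
    rw [mulVec_mulVec, ← pow_succ']
    exact mem_krylov_pow A r0 (by omega)
  | zero => simp
  | add u w _ _ hu hw => simpa [mulVec_add] using add_mem hu hw
  | smul c u _ hu => simpa [mulVec_smul] using Submodule.smul_mem _ c hu

lemma krylov_add_two_eq_sup {m : ℕ} {v : Fin n → ℝ}
    (hv : krylov A r0 (m + 1) = krylov A r0 m ⊔ ℝ ∙ v) :
    krylov A r0 (m + 2) = krylov A r0 (m + 1) ⊔ ℝ ∙ (r0 + A *ᵥ v) := by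
  have hv_mem : v ∈ krylov A r0 (m + 1) := hv ▸ mem_sup_right (mem_span_singleton_self v)
  refine le_antisymm ?_ (sup_le (krylov_mono A r0 (by omega)) ?_)
  · obtain ⟨u, hu, _, hc, hpow⟩ := mem_sup.mp (hv ▸ mem_krylov_pow A r0 (Nat.lt_succ_self m))
    obtain ⟨c, rfl⟩ := mem_span_singleton.mp hc
    have hpow_succ : (A ^ (m + 1)) *ᵥ r0 = (A *ᵥ u - c • r0) + c • (r0 + A *ᵥ v) := by
      rw [pow_succ', ← mulVec_mulVec, ← hpow, mulVec_add, mulVec_smul]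
      module
    rw [krylov_succ A r0 (m + 1), hpow_succ]
    refine sup_le le_sup_left ((span_singleton_le_iff_mem _ _).2 (add_mem (mem_sup_left ?_) ?_))
    · exact sub_mem (mulVec_mem_krylov A r0 hu)
        (Submodule.smul_mem _ c (self_mem_krylov A r0 (by omega)))
    · exact mem_sup_right (Submodule.smul_mem _ c (mem_span_singleton_self _))
  · exact (span_singleton_le_iff_mem _ _).2
      (add_mem (self_mem_krylov A r0 (by omega)) (mulVec_mem_krylov A r0 hv_mem))

end Krylov

section Residual

variable {n : ℕ} (A : Matrix (Fin n) (Fin n) ℝ) (b : Fin n → ℝ)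

lemma norm2_eq_norm (v : Fin n → ℝ) :
    norm2 v = ‖(WithLp.toLp 2 v : EuclideanSpace ℝ (Fin n))‖ := by
  simp [norm2, EuclideanSpace.norm_eq, dotProduct, sq]

lemma residv_eq_add (x0 y : Fin n → ℝ) : residv A b y = residv A b x0 + A *ᵥ (y - x0) := by
  simp only [residv, mulVec_sub]
  abel

lemma residv_midpoint (x y : Fin n → ℝ) :
    residv A b ((1 / 2 : ℝ) • (x + y)) = (1 / 2 : ℝ) • (residv A b x + residv A b y) := by
  simp only [residv, mulVec_smul, mulVec_add]
  module

def IsMinResidualOn (x0 : Fin n → ℝ) (S : Submodule ℝ (Fin n → ℝ)) (x : Fin n → ℝ) : Prop :=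
  x - x0 ∈ S ∧ ∀ y, y - x0 ∈ S → norm2 (residv A b x) ≤ norm2 (residv A b y)

variable {A b}

-- The 2-norm is strictly convex, so the midpoint of two minimizers would do strictly better.
lemma IsMinResidualOn.residv_eq {x0 x y : Fin n → ℝ} {S : Submodule ℝ (Fin n → ℝ)}
    (hx : IsMinResidualOn A b x0 S x) (hy : IsMinResidualOn A b x0 S y) :
    residv A b x = residv A b y := by
  have hmid : (1 / 2 : ℝ) • (x + y) - x0 ∈ S := by
    have e : (1 / 2 : ℝ) • (x + y) - x0 = (1 / 2 : ℝ) • ((x - x0) + (y - x0)) := by module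
    exact e ▸ S.smul_mem _ (add_mem hx.1 hy.1)
  have hnorm := le_antisymm (hx.2 y hy.1) (hy.2 x hx.1)
  have hle := hx.2 _ hmid
  rw [residv_midpoint] at hle
  simp only [norm2_eq_norm] at hnorm hle
  by_contra hne
  have hlt := (norm_midpoint_lt_iff hnorm).2 (fun h => hne (WithLp.toLp_injective 2 h))
  simp only [WithLp.toLp_smul, WithLp.toLp_add] at hle
  exact hle.not_gt hlt

lemma IsGMRES.isMinResidualOn {x0 : Fin n → ℝ} {x : ℕ → Fin n → ℝ} (h : IsGMRES A b x0 x)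
    (k : ℕ) :
    IsMinResidualOn A b x0 (krylov A (residv A b x0) k) (x k) :=
  h.2 k

end Residual

section NGMRES

variable {n : ℕ} (A : Matrix (Fin n) (Fin n) ℝ) (b : Fin n → ℝ) (x : ℕ → Fin n → ℝ)
  (x0 : Fin n → ℝ)

def iterateSpan (j : ℕ) : Submodule ℝ (Fin n → ℝ) :=
  span ℝ ((fun i => x i - x0) '' Set.Iic j)

/-- `x0 + ngmresSpace A b x x0 j` is the affine hull of `x 0, …, x j, q (x j)`, in which full
NGMRES chooses `x (j + 1)` (provided `x 0 = x0`). -/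
def ngmresSpace (j : ℕ) : Submodule ℝ (Fin n → ℝ) :=
  iterateSpan x x0 j ⊔ ℝ ∙ residv A b (x j)

lemma sub_mem_iterateSpan {i j : ℕ} (h : i ≤ j) : x i - x0 ∈ iterateSpan x x0 j :=
  subset_span ⟨i, h, rfl⟩

lemma iterateSpan_zero (h0 : x 0 = x0) : iterateSpan x x0 0 = ⊥ := by
  simp [iterateSpan, h0]

lemma iterateSpan_succ (j : ℕ) :
    iterateSpan x x0 (j + 1) = iterateSpan x x0 j ⊔ ℝ ∙ (x (j + 1) - x0) := by
  rw [iterateSpan, iterateSpan, ← Order.succ_eq_add_one, Order.Iic_succ, Set.image_insert_eq,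
    span_insert, sup_comm]

lemma qmap_eq_sub_residv (y : Fin n → ℝ) : qmap A b y = y - residv A b y := by
  simp only [qmap, residv, sub_mulVec, one_mulVec]
  abel

lemma ngmresUpdate_sub_mem (β : ℕ → ℝ) (j : ℕ) :
    ngmresUpdate A b x β j j - x0 ∈ ngmresSpace A b x x0 j := by
  have hq : qmap A b (x j) - x0 ∈ ngmresSpace A b x x0 j := by
    rw [qmap_eq_sub_residv, sub_right_comm]
    exact sub_mem (mem_sup_left (sub_mem_iterateSpan x x0 le_rfl))
      (mem_sup_right (mem_span_singleton_self _))
  have e : ngmresUpdate A b x β j j - x0 = (qmap A b (x j) - x0) +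
      ∑ i ∈ Finset.range (j + 1), β i • ((qmap A b (x j) - x0) - (x (j - i) - x0)) := by
    simp only [ngmresUpdate, sub_sub_sub_cancel_right]
    abel
  rw [e]
  exact add_mem hq (sum_mem fun i _ => Submodule.smul_mem _ _
    (sub_mem hq (mem_sup_left (sub_mem_iterateSpan x x0 (Nat.sub_le j i)))))

lemma exists_ngmresUpdate_eq (h0 : x 0 = x0) {j : ℕ} {y : Fin n → ℝ}
    (hy : y - x0 ∈ ngmresSpace A b x x0 j) : ∃ β, ngmresUpdate A b x β j j = y := by
  set q := qmap A b (x j)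
  set D := span ℝ ((fun i => q - x (j - i)) '' ↑(Finset.range (j + 1)))
  have gen : ∀ i ≤ j, q - x i ∈ D := fun i hi =>
    subset_span ⟨j - i, by simp only [Finset.coe_range, Set.mem_Iio]; omega,
      by simp only [Nat.sub_sub_self hi]⟩
  have hq : q - x0 ∈ D := h0 ▸ gen 0 (Nat.zero_le j)
  have hS : ngmresSpace A b x x0 j ≤ D := by
    refine sup_le (span_le.2 ?_) ((span_singleton_le_iff_mem _ _).2 ?_)
    · rintro _ ⟨i, hi, rfl⟩
      simpa using sub_mem hq (gen i hi)
    · simpa [q, qmap_eq_sub_residv] using gen j le_rfl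
  have hyq : y - q ∈ D := by simpa using sub_mem (hS hy) hq
  obtain ⟨β, hβ⟩ := (mem_span_image_finset_iff_exists_fun' ℝ).1 hyq
  exact ⟨β, by rw [ngmresUpdate, hβ, add_sub_cancel]⟩

variable {A b x x0}

lemma IsNGMRES.isMinResidualOn_ngmresSpace {β : ℕ → ℕ → ℝ}
    (h : IsNGMRES A b x0 (fun k => k) x β) (j : ℕ) :
    IsMinResidualOn A b x0 (ngmresSpace A b x x0 j) (x (j + 1)) := by
  refine ⟨(h.2 j).1 ▸ ngmresUpdate_sub_mem A b x x0 (β j) j, fun y hy => ?_⟩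
  obtain ⟨β', rfl⟩ := exists_ngmresUpdate_eq A b x x0 h.1 hy
  exact (h.2 j).2 β'

end NGMRES

section Stagnation

variable {n : ℕ} {A : Matrix (Fin n) (Fin n) ℝ} {b x0 : Fin n → ℝ} {x xG : ℕ → Fin n → ℝ}

lemma sub_notMem_krylov_of_lt (hG : IsGMRES A b x0 xG) {j : ℕ} {w : Fin n → ℝ}
    (hw : IsMinResidualOn A b x0 (krylov A (residv A b x0) (j + 1)) w)
    (hlt : norm2 (residv A b (xG (j + 1))) < norm2 (residv A b (xG j))) :
    w - x0 ∉ krylov A (residv A b x0) j := fun hmem =>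
  not_le.2 hlt (((hG.isMinResidualOn j).2 w hmem).trans (hw.2 _ (hG.isMinResidualOn (j + 1)).1))

lemma iterateSpan_succ_eq_krylov {j : ℕ} (hV : iterateSpan x x0 j = krylov A (residv A b x0) j)
    (hmem : x (j + 1) - x0 ∈ krylov A (residv A b x0) (j + 1))
    (hnot : x (j + 1) - x0 ∉ krylov A (residv A b x0) j) :
    iterateSpan x x0 (j + 1) = krylov A (residv A b x0) (j + 1) ∧
      ngmresSpace A b x x0 (j + 1) = krylov A (residv A b x0) (j + 2) := by
  have hK : krylov A (residv A b x0) (j + 1) =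
      krylov A (residv A b x0) j ⊔ ℝ ∙ (x (j + 1) - x0) := by
    rw [krylov_succ] at hmem ⊢
    exact (sup_span_singleton_exchange hmem hnot).symm
  have hV' : iterateSpan x x0 (j + 1) = krylov A (residv A b x0) (j + 1) := by
    rw [iterateSpan_succ, hV, hK]
  refine ⟨hV', ?_⟩
  rw [ngmresSpace, hV', residv_eq_add A b x0 (x (j + 1)), krylov_add_two_eq_sup A _ hK]

variable {β : ℕ → ℕ → ℝ} {k0 : ℕ}

theorem IsNGMRES.ngmresSpace_eq_krylov (hNG : IsNGMRES A b x0 (fun k => k) x β)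
    (hG : IsGMRES A b x0 xG)
    (hdec : ∀ k, 0 < k → k < k0 →
      norm2 (residv A b (xG k)) < norm2 (residv A b (xG (k - 1)))) :
    ∀ j < k0, iterateSpan x x0 j = krylov A (residv A b x0) j ∧
      ngmresSpace A b x x0 j = krylov A (residv A b x0) (j + 1)
  | 0, _ => by
    have hV := iterateSpan_zero x x0 hNG.1
    exact ⟨by rw [hV, krylov_zero], by rw [ngmresSpace, hV, hNG.1, bot_sup_eq, krylov_one]⟩
  | j + 1, hj => by
    obtain ⟨hV, hS⟩ := ngmresSpace_eq_krylov hNG hG hdec j (by omega)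
    have hmin := hS ▸ hNG.isMinResidualOn_ngmresSpace j
    exact iterateSpan_succ_eq_krylov hV hmin.1
      (sub_notMem_krylov_of_lt hG hmin (by simpa using hdec (j + 1) j.succ_pos hj))

theorem IsNGMRES.isMinResidualOn_krylov (hNG : IsNGMRES A b x0 (fun k => k) x β)
    (hG : IsGMRES A b x0 xG)
    (hdec : ∀ k, 0 < k → k < k0 →
      norm2 (residv A b (xG k)) < norm2 (residv A b (xG (k - 1)))) :
    ∀ j ≤ k0, IsMinResidualOn A b x0 (krylov A (residv A b x0) j) (x j)
  | 0, _ => by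
    rw [hNG.1]
    exact hG.1 ▸ hG.isMinResidualOn 0
  | j + 1, hj =>
    (hNG.ngmresSpace_eq_krylov hG hdec j (by omega)).2 ▸ hNG.isMinResidualOn_ngmresSpace j

end Stagnation

theorem stmt4_general (n : ℕ) (A : Matrix (Fin n) (Fin n) ℝ) (b x0 : Fin n → ℝ)
    (xNG xG : ℕ → Fin n → ℝ) (β : ℕ → ℕ → ℝ)
    (hNG : IsNGMRES A b x0 (fun k => k) xNG β)
    (hG : IsGMRES A b x0 xG)
    (k0 : ℕ)
    (hdec : ∀ k, 0 < k → k < k0 →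
      norm2 (residv A b (xG k)) < norm2 (residv A b (xG (k - 1))))
    (hstag : residv A b (xG k0) = residv A b (xG (k0 - 1))) :
    residv A b (xNG k0) = residv A b (xNG (k0 - 1)) := by
  have hmin := hNG.isMinResidualOn_krylov hG hdec
  calc residv A b (xNG k0) = residv A b (xG k0) :=
        (hmin k0 le_rfl).residv_eq (hG.isMinResidualOn k0)
    _ = residv A b (xG (k0 - 1)) := hstag
    _ = residv A b (xNG (k0 - 1)) :=
        ((hmin (k0 - 1) (Nat.sub_le k0 1)).residv_eq (hG.isMinResidualOn (k0 - 1))).symm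

/-- if additionally GMRES stagnates at step `k0`
(`r_{k0}^G = r_{k0-1}^G ≠ 0`), then full NGMRES stagnates too. -/
theorem stmt4 (n : ℕ) (A : Matrix (Fin n) (Fin n) ℝ) (b x0 xstar : Fin n → ℝ)
    (xNG xG : ℕ → Fin n → ℝ) (β : ℕ → ℕ → ℝ)
    (hNG : IsNGMRES A b x0 (fun k => k) xNG β)
    (hG : IsGMRES A b x0 xG)
    (hstar : A.mulVec xstar = b) (hx0 : x0 ≠ xstar)
    (k0 : ℕ) (hk0 : 0 < k0)
    (hrk0 : residv A b (xG (k0 - 1)) ≠ 0)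
    (hdec : ∀ k, 0 < k → k < k0 →
      norm2 (residv A b (xG k)) < norm2 (residv A b (xG (k - 1))))
    (hstag : residv A b (xG k0) = residv A b (xG (k0 - 1))) :
    residv A b (xNG k0) = residv A b (xNG (k0 - 1)) :=
  stmt4_general n A b x0 xNG xG β hNG hG k0 hdec hstag

end
end

section
/- The residuals of NGMRES (with any window size m, including the full version m_k = k) satisfy the orthogonality relation r_{k+1}ᵀ W_k = 0, where W_k = [r_k − M r_k, r_{k−1} − M r_k, …, r_{k−m_k} − M r_k]; equivalently, r_{k+1}ᵀ A r_k = 0 and r_{k+1}ᵀ (r_{k−j} − r_{k−i}) = 0 for all i, j = 0, 1, …, m_k. -/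
open Matrix Filter

noncomputable section

/-!
The residual of `x_{k+1}` is the affine function `M r_k + ∑ β_i (M r_k - r_{k-i})` of the
coefficients, so minimality of its norm along each coordinate direction `β_i` gives the normal
equations `r_{k+1} ⊥ (r_{k-i} - M r_k)`. The other two relations are differences of these,
using `r_k - M r_k = A r_k` for `i = 0`.
-/

section LeastSquares

variable {ι R : Type*} [Fintype ι] [Field R] [LinearOrder R] [IsStrictOrderedRing R]

theorem Matrix.dotProduct_eq_zero_of_forall_dotProduct_self_le {v w : ι → R}
    (h : ∀ t : R, v ⬝ᵥ v ≤ (v + t • w) ⬝ᵥ (v + t • w)) : v ⬝ᵥ w = 0 := by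
  have hquad : ∀ t : R, 0 ≤ (w ⬝ᵥ w) * (t * t) + 2 * (v ⬝ᵥ w) * t + 0 := fun t => by
    have := h t
    simp only [add_dotProduct, dotProduct_add, smul_dotProduct, dotProduct_smul, smul_eq_mul,
      dotProduct_comm w v] at this
    linarith
  have := discrim_le_zero hquad
  rw [discrim] at this
  nlinarith [sq_nonneg (v ⬝ᵥ w)]

theorem Matrix.dotProduct_eq_zero_of_isMin_sum {κ : Type*} [DecidableEq κ] (s : Finset κ)
    (c : ι → R) (w : κ → ι → R) (β : κ → R)
    (hmin : ∀ β' : κ → R, (c + ∑ j ∈ s, β j • w j) ⬝ᵥ (c + ∑ j ∈ s, β j • w j) ≤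
      (c + ∑ j ∈ s, β' j • w j) ⬝ᵥ (c + ∑ j ∈ s, β' j • w j))
    {i : κ} (hi : i ∈ s) : (c + ∑ j ∈ s, β j • w j) ⬝ᵥ w i = 0 := by
  refine dotProduct_eq_zero_of_forall_dotProduct_self_le fun t => ?_
  have hshift : c + ∑ j ∈ s, (β j + if j = i then t else 0) • w j =
      c + ∑ j ∈ s, β j • w j + t • w i := by
    simp only [add_smul, ite_smul, zero_smul, Finset.sum_add_distrib, Finset.sum_ite_eq', hi,
      if_true, add_assoc]
  simpa only [hshift] using hmin fun j => β j + if j = i then t else 0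

end LeastSquares

theorem norm2_le_norm2_iff {n : ℕ} {v w : Fin n → ℝ} :
    norm2 v ≤ norm2 w ↔ v ⬝ᵥ v ≤ w ⬝ᵥ w :=
  Real.sqrt_le_sqrt_iff (Fintype.sum_nonneg fun _ => mul_self_nonneg _)

section Residual

variable {n : ℕ} (A : Matrix (Fin n) (Fin n) ℝ) (b : Fin n → ℝ)

theorem residv_add (y v : Fin n → ℝ) : residv A b (y + v) = residv A b y + A *ᵥ v := by
  simp only [residv, mulVec_add]
  abel

theorem mulVec_sub_eq_residv_sub (y z : Fin n → ℝ) :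
    A *ᵥ (y - z) = residv A b y - residv A b z := by
  simp only [residv, mulVec_sub, sub_sub_sub_cancel_right]

-- `A` commutes with `M = 1 - A`.
theorem residv_qmap (y : Fin n → ℝ) : residv A b (qmap A b y) = (1 - A) *ᵥ residv A b y := by
  simp only [residv, qmap, mulVec_add, mulVec_sub, sub_mulVec, one_mulVec, mulVec_mulVec,
    sub_mul, one_mul]
  abel

theorem residv_ngmresUpdate (x : ℕ → Fin n → ℝ) (β : ℕ → ℝ) (k m : ℕ) :
    residv A b (ngmresUpdate A b x β k m) =
      (1 - A) *ᵥ residv A b (x k) + ∑ i ∈ Finset.range (m + 1),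
        β i • ((1 - A) *ᵥ residv A b (x k) - residv A b (x (k - i))) := by
  simp only [ngmresUpdate, residv_add, mulVec_sum, mulVec_smul,
    mulVec_sub_eq_residv_sub A b, residv_qmap]

end Residual

theorem stmt10_general (n : ℕ) (A : Matrix (Fin n) (Fin n) ℝ) (b x0 : Fin n → ℝ)
    (mk : ℕ → ℕ)
    (x : ℕ → Fin n → ℝ) (β : ℕ → ℕ → ℝ)
    (hNG : IsNGMRES A b x0 mk x β) :
    ∀ k,
      (∀ i ≤ mk k, residv A b (x (k + 1)) ⬝ᵥ
        (residv A b (x (k - i)) - (1 - A).mulVec (residv A b (x k))) = 0) ∧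
      residv A b (x (k + 1)) ⬝ᵥ A.mulVec (residv A b (x k)) = 0 ∧
      (∀ i ≤ mk k, ∀ j ≤ mk k, residv A b (x (k + 1)) ⬝ᵥ
        (residv A b (x (k - j)) - residv A b (x (k - i))) = 0) := by
  intro k
  obtain ⟨hx, hmin⟩ := hNG.2 k
  have hW : ∀ i ≤ mk k, residv A b (x (k + 1)) ⬝ᵥ
      (residv A b (x (k - i)) - (1 - A) *ᵥ residv A b (x k)) = 0 := by
    intro i hi
    rw [← neg_sub, dotProduct_neg, neg_eq_zero, hx, residv_ngmresUpdate]
    refine dotProduct_eq_zero_of_isMin_sum _ _ _ _ (fun β' => ?_) (Finset.mem_range.2 (by omega))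
    simpa only [hx, residv_ngmresUpdate, norm2_le_norm2_iff] using hmin β'
  refine ⟨hW, ?_, fun i hi j hj => ?_⟩
  · simpa only [Nat.sub_zero, sub_mulVec, one_mulVec, sub_sub_cancel] using hW 0 (Nat.zero_le _)
  · rw [← sub_sub_sub_cancel_right _ _ ((1 - A) *ᵥ residv A b (x k)), dotProduct_sub, hW j hj,
      hW i hi, sub_zero]

/-- NGMRES orthogonality `r_{k+1}ᵀ W_k = 0` (columnwise:
`r_{k+1} ⊥ (r_{k-i} - M r_k)` for `0 ≤ i ≤ m_k`); equivalently `r_{k+1}ᵀ A r_k = 0`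
and `r_{k+1}ᵀ (r_{k-j} - r_{k-i}) = 0` for all `i, j ≤ m_k`.  The window function `mk`
covers both NGMRES(m) (`mk k = min k m`) and full NGMRES (`mk k = k`). -/
theorem stmt10 (n : ℕ) (A : Matrix (Fin n) (Fin n) ℝ) (b x0 : Fin n → ℝ)
    (mk : ℕ → ℕ) (hmk : ∀ k, mk k ≤ k)
    (x : ℕ → Fin n → ℝ) (β : ℕ → ℕ → ℝ)
    (hNG : IsNGMRES A b x0 mk x β) :
    ∀ k,
      (∀ i ≤ mk k, residv A b (x (k + 1)) ⬝ᵥ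
        (residv A b (x (k - i)) - (1 - A).mulVec (residv A b (x k))) = 0) ∧
      residv A b (x (k + 1)) ⬝ᵥ A.mulVec (residv A b (x k)) = 0 ∧
      (∀ i ≤ mk k, ∀ j ≤ mk k, residv A b (x (k + 1)) ⬝ᵥ
        (residv A b (x (k - j)) - residv A b (x (k - i))) = 0) :=
  stmt10_general n A b x0 mk x β hNG
end
end
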